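/- Let f₁, …, f_m : ℝⁿ → ℝ be differentiable with each ∇f_i Lipschitz continuous with constant L_i on ℝⁿ, and set L = max_{i∈[m]} L_i. Fix 0 < σ₁ < σ₂ < 1 and 0 < a ≤ b. Let x ∈ ℝⁿ, let d_SD(x) be the steepest descent direction at x, assume d_SD(x) ≠ 0, and let μ ∈ [a, b]. Put d = μ⁻¹ d_SD(x) and suppose t > 0 satisfies the Wolfe conditions f_i(x + t d) ≤ f_i(x) + σ₁ t 𝒟(x, d) for all i ∈ [m] and 𝒟(x + t d, d) ≥ σ₂ 𝒟(x, d). Then for every i ∈ [m], f_i(x) − f_i(x + t d) ≥ (σ₁ (1 − σ₂) a / (2 b L)) ‖d_SD(x)‖². -/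

import Mathlib

open RealInnerProductSpace

noncomputable def maxInner {n m : ℕ} (hm : 0 < m) (g : Fin m → EuclideanSpace ℝ (Fin n))
    (d : EuclideanSpace ℝ (Fin n)) : ℝ :=
  Finset.univ.sup' ⟨⟨0, hm⟩, Finset.mem_univ _⟩ fun i => ⟪g i, d⟫

noncomputable def Dmax {n m : ℕ} (hm : 0 < m) (f : Fin m → EuclideanSpace ℝ (Fin n) → ℝ)
    (y d : EuclideanSpace ℝ (Fin n)) : ℝ :=
  Finset.univ.sup' ⟨⟨0, hm⟩, Finset.mem_univ _⟩ fun i => ⟪gradient (f i) y, d⟫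

lemma maxInner_smul {n m : ℕ} (hm : 0 < m) (g : Fin m → EuclideanSpace ℝ (Fin n))
    (c : ℝ) (hc : 0 ≤ c) (d : EuclideanSpace ℝ (Fin n)) :
    maxInner hm g (c • d) = c * maxInner hm g d := by
  unfold maxInner
  simp only [real_inner_smul_right]
  exact (Finset.comp_sup'_eq_sup'_comp _ (fun r : ℝ => c * r)
    (fun p q => mul_max_of_nonneg p q hc)).symm

set_option maxHeartbeats 1000000

/-- sufficient decrease `f_i(x) − f_i(x+td) ≥ (σ₁(1−σ₂)a/(2bL))‖d_SD(x)‖²`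
for a Wolfe step along `d = μ⁻¹ d_SD(x)` with `μ ∈ [a, b]`. -/
theorem stmt_11 (n m : ℕ) (hm : 0 < m) (f : Fin m → EuclideanSpace ℝ (Fin n) → ℝ)
    (hf : ∀ i, Differentiable ℝ (f i))
    (Lc : Fin m → ℝ) (hLc : ∀ i, 0 < Lc i)
    (hLip : ∀ i : Fin m, ∀ y z : EuclideanSpace ℝ (Fin n),
      ‖gradient (f i) y - gradient (f i) z‖ ≤ Lc i * ‖y - z‖)
    (L : ℝ) (hL : L = Finset.univ.sup' ⟨⟨0, hm⟩, Finset.mem_univ _⟩ Lc)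
    (σ₁ σ₂ : ℝ) (hσ₁ : 0 < σ₁) (hσ₁₂ : σ₁ < σ₂) (hσ₂ : σ₂ < 1)
    (a b : ℝ) (ha : 0 < a) (hab : a ≤ b)
    (x : EuclideanSpace ℝ (Fin n)) (dSD : EuclideanSpace ℝ (Fin n))
    (hdSD : ∀ d' : EuclideanSpace ℝ (Fin n),
      maxInner hm (fun i => gradient (f i) x) dSD + ‖dSD‖ ^ 2 / 2 ≤
        maxInner hm (fun i => gradient (f i) x) d' + ‖d'‖ ^ 2 / 2)
    (hdSDne : dSD ≠ 0)
    (μ : ℝ) (hμ : μ ∈ Set.Icc a b)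
    (d : EuclideanSpace ℝ (Fin n)) (hd : d = μ⁻¹ • dSD)
    (t : ℝ) (ht : 0 < t)
    (hwolfe1 : ∀ i : Fin m, f i (x + t • d) ≤ f i x + σ₁ * t * Dmax hm f x d)
    (hwolfe2 : σ₂ * Dmax hm f x d ≤ Dmax hm f (x + t • d) d) :
    ∀ i : Fin m, σ₁ * (1 - σ₂) * a / (2 * b * L) * ‖dSD‖ ^ 2 ≤
      f i x - f i (x + t • d) := by
  intro i
  obtain ⟨hμa, hμb⟩ := hμ
  have hμpos : 0 < μ := lt_of_lt_of_le ha hμa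
  set ν : ℝ := μ⁻¹ with hν
  have hνpos : 0 < ν := inv_pos.mpr hμpos
  have hμν : μ * ν = 1 := mul_inv_cancel₀ hμpos.ne'
  set M : ℝ := maxInner hm (fun i => gradient (f i) x) dSD with hM
  set N : ℝ := ‖dSD‖ ^ 2 with hN
  have hNpos : 0 < N := by
    have : 0 < ‖dSD‖ := norm_pos_iff.mpr hdSDne
    positivity
  -- step 1 : M ≤ -N/2
  have h0 : M + N / 2 ≤ 0 := by
    have h := hdSD 0
    have e : maxInner hm (fun i => gradient (f i) x) 0 = 0 := by
      unfold maxInner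
      simp only [inner_zero_right]
      exact Finset.sup'_const _ _
    rw [e] at h
    simpa using h
  -- step 2 : M = -N
  have hMN : M = -N := by
    have hcnn : (0:ℝ) ≤ -M / N := div_nonneg (by linarith) hNpos.le
    set c : ℝ := -M / N with hc
    have hcN : c * N = -M := div_mul_cancel₀ _ hNpos.ne'
    have hkey : M + N / 2 ≤ c * M + c ^ 2 * N / 2 := by
      have h := hdSD (c • dSD)
      rw [maxInner_smul hm _ c hcnn dSD] at h
      have hn : ‖c • dSD‖ ^ 2 = c ^ 2 * N := by
        rw [norm_smul, mul_pow, hN, Real.norm_eq_abs, sq_abs]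
      rw [hn] at h
      linarith
    have hsq : (M + N) ^ 2 ≤ 0 := by nlinarith [mul_le_mul_of_nonneg_right hkey hNpos.le, hcN, sq_nonneg (M + N)]
    nlinarith [sq_nonneg (M + N)]
  have hDx : Dmax hm f x d = -(ν * N) := by
    have : Dmax hm f x d = maxInner hm (fun i => gradient (f i) x) d := rfl
    rw [this, hd, maxInner_smul hm _ _ hνpos.le, ← hM, hMN]
    ring
  have hnormd : ‖d‖ = ν * ‖dSD‖ := by
    rw [hd, norm_smul, Real.norm_eq_abs, abs_of_pos hνpos]
  have hLpos : 0 < L := by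
    rw [hL]
    exact lt_of_lt_of_le (hLc ⟨0, hm⟩) (Finset.le_sup' _ (Finset.mem_univ _))
  -- step 3 : gradient Lipschitz bound on Dmax increase
  have hDstep : Dmax hm f (x + t • d) d ≤ Dmax hm f x d + L * (t * ‖d‖) * ‖d‖ := by
    apply Finset.sup'_le
    intro j _
    have h2 := real_inner_le_norm (gradient (f j) (x + t • d) - gradient (f j) x) d
    have h3 := hLip j (x + t • d) x
    have h4 : ⟪gradient (f j) (x + t • d) - gradient (f j) x, d⟫ =
        ⟪gradient (f j) (x + t • d), d⟫ - ⟪gradient (f j) x, d⟫ := inner_sub_left _ _ _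
    have h5 : ‖(x + t • d) - x‖ = t * ‖d‖ := by
      rw [add_sub_cancel_left, norm_smul, Real.norm_eq_abs, abs_of_pos ht]
    have h6 : ⟪gradient (f j) x, d⟫ ≤ Dmax hm f x d :=
      Finset.le_sup' (fun i => ⟪gradient (f i) x, d⟫) (Finset.mem_univ j)
    have h7 : Lc j ≤ L := hL ▸ Finset.le_sup' _ (Finset.mem_univ j)
    rw [h5] at h3
    have h8 : Lc j * (t * ‖d‖) * ‖d‖ ≤ L * (t * ‖d‖) * ‖d‖ :=
      mul_le_mul_of_nonneg_right
        (mul_le_mul_of_nonneg_right h7 (by positivity)) (norm_nonneg d)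
    have h9 : ‖gradient (f j) (x + t • d) - gradient (f j) x‖ * ‖d‖ ≤ Lc j * (t * ‖d‖) * ‖d‖ :=
      mul_le_mul_of_nonneg_right h3 (norm_nonneg d)
    linarith
  -- step 4 : lower bound on t
  have hνN : 0 < ν * N := mul_pos hνpos hNpos
  have hchain : (1 - σ₂) ≤ L * t * ν := by
    have h := hwolfe2.trans hDstep
    rw [hDx, hnormd] at h
    have hq : L * (t * (ν * ‖dSD‖)) * (ν * ‖dSD‖) = (L * t * ν) * (ν * N) := by
      rw [hN]; ring
    rw [hq] at h
    have h'' : (1 - σ₂) * (ν * N) ≤ (L * t * ν) * (ν * N) := by linarith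
    exact le_of_mul_le_mul_right h'' hνN
  -- step 5 : conclude
  have hw1 := hwolfe1 i
  rw [hDx] at hw1
  have hb : 0 < b := ha.trans_le hab
  have h2bL : (0:ℝ) < 2 * b * L := mul_pos (mul_pos two_pos hb) hLpos
  rw [div_mul_eq_mul_div, div_le_iff₀ h2bL]
  have hR : σ₁ * t * (ν * N) ≤ f i x - f i (x + t • d) := by linarith
  have s1 : σ₁ * t * (ν * N) * (2 * b * L) ≤ (f i x - f i (x + t • d)) * (2 * b * L) :=
    mul_le_mul_of_nonneg_right hR h2bL.le
  have s2 : (1 - σ₂) * (σ₁ * N * (2 * b)) ≤ (L * t * ν) * (σ₁ * N * (2 * b)) :=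
    mul_le_mul_of_nonneg_right hchain
      (mul_nonneg (mul_nonneg hσ₁.le hNpos.le) (by linarith))
  have s3 : (0:ℝ) ≤ σ₁ * (1 - σ₂) * N * (2 * b - a) :=
    mul_nonneg (mul_nonneg (mul_nonneg hσ₁.le (by linarith)) hNpos.le) (by linarith)
  nlinarith [s1, s2, s3]
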